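/- arXiv:2503.19710 — 3 statements merged into one kernel-verified Lean document; each statement's English description precedes it below -/
import Mathlib

section
/- Let Γ be a d×d symmetric positive definite real matrix and let R be a d×d P-matrix (so R_{kk} > 0 for all k). Set Λ = diag(Γ_{11}^{−1/2},…,Γ_{dd}^{−1/2}) and V = diag(R_{11}^{−1},…,R_{dd}^{−1}). If the skew symmetric condition 2ΛΓΛ = ΛRVΛ^{−1} + Λ^{−1}V Rᵀ Λ holds, then for every k ∈ {1,…,d}, m_k = (u_kᵀ Γ u_k)/(2 u_kᵀ R_{:,k}) = Γ_{kk}/(2 R_{kk}). -/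
/-! Conjugating the skew symmetric condition by `Λ⁻¹` turns it into `2Γ = RD + DRᵀ` with
`D = diag(Γ_kk / R_kk)`, hence `uᵀΓu = (uᵀR) D u`. For `u = u_k` the row vector `uᵀR` vanishes
in the coordinates below `k` (this is the defining system of the weights) and `u` vanishes above
`k`, so `u_kᵀΓu_k = D_kk · u_kᵀR_{:,k}`. The pairing `u_kᵀR_{:,k}` is nonzero: otherwise `u_k`,
restricted to the coordinates `≤ k`, would lie in the left kernel of a principal submatrix of the
P-matrix `R`. -/

open MeasureTheory Filter

noncomputable section

namespace SRBMPaper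

/-- The nonnegative orthant `ℝ₊^d`. -/
def posOrthant (d : ℕ) : Set (Fin d → ℝ) := {z | ∀ i, 0 ≤ z i}

/-- `R` is a P-matrix: every principal minor is positive. -/
def IsPMatrix {d : ℕ} (R : Matrix (Fin d) (Fin d) ℝ) : Prop :=
  ∀ s : Finset (Fin d),
    0 < (R.submatrix (fun i : s => (i : Fin d)) (fun i : s => (i : Fin d))).det

/-- `R` is a nonsingular M-matrix: nonpositive off-diagonal entries and
every principal minor positive. -/
def IsMMatrix {d : ℕ} (R : Matrix (Fin d) (Fin d) ℝ) : Prop :=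
  (∀ i j, i ≠ j → R i j ≤ 0) ∧ IsPMatrix R

/-- First-order partial derivative of `f` in coordinate `j`. -/
def pd1 {d : ℕ} (f : (Fin d → ℝ) → ℝ) (j : Fin d) (z : Fin d → ℝ) : ℝ :=
  fderiv ℝ f z (Pi.single j 1)

/-- Second-order partial derivative of `f` in coordinates `i`, `j`. -/
def pd2 {d : ℕ} (f : (Fin d → ℝ) → ℝ) (i j : Fin d) (z : Fin d → ℝ) : ℝ :=
  fderiv ℝ (fun w => pd1 f j w) z (Pi.single i 1)

/-- `f` is twice continuously differentiable and `f` together with all of its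
first- and second-order partial derivatives is bounded on the orthant. -/
def IsC2Bounded {d : ℕ} (f : (Fin d → ℝ) → ℝ) : Prop :=
  ContDiff ℝ 2 f ∧
    ∃ C : ℝ, ∀ z ∈ posOrthant d,
      |f z| ≤ C ∧ (∀ j, |pd1 f j z| ≤ C) ∧ (∀ i j, |pd2 f i j z| ≤ C)

/-- The basic adjoint relationship (BAR) at traffic-intensity parameter `r`. -/
def SatisfiesBAR {d : ℕ} (Γ R : Matrix (Fin d) (Fin d) ℝ) (r : ℝ)
    (π : Measure (Fin d → ℝ)) (ν : Fin d → Measure (Fin d → ℝ)) : Prop :=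
  ∀ f : (Fin d → ℝ) → ℝ, IsC2Bounded f →
    (1 / 2) * (∫ z, ∑ i, ∑ j, Γ i j * pd2 f i j z ∂π)
      - (∑ i : Fin d, r ^ ((i : ℕ) + 1) * ∫ z, ∑ j, R j i * pd1 f j z ∂π)
      + (∑ i : Fin d, r ^ ((i : ℕ) + 1) * ∫ z, ∑ j, R j i * pd1 f j z ∂(ν i)) = 0

/-- For every `r ∈ (0,1)`, `π r` is a Borel probability measure on the orthant,
each `ν i r` is a Borel probability measure on the face `{z i = 0}` of the orthant,
and together they satisfy the basic adjoint relationship. -/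
def BARFamily {d : ℕ} (Γ R : Matrix (Fin d) (Fin d) ℝ)
    (π : ℝ → Measure (Fin d → ℝ)) (ν : Fin d → ℝ → Measure (Fin d → ℝ)) : Prop :=
  ∀ r ∈ Set.Ioo (0 : ℝ) 1,
    IsProbabilityMeasure (π r) ∧ π r (posOrthant d) = 1 ∧
    (∀ i, IsProbabilityMeasure (ν i r) ∧
      ν i r {z | z ∈ posOrthant d ∧ z i = 0} = 1) ∧
    SatisfiesBAR Γ R r (π r) (fun i => ν i r)

/-- `u` is the vector `u_k` associated with the matrix `R`:
`u_k = (w_{1k}, …, w_{k-1,k}, 1, 0, …, 0)ᵀ` where the weights solve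
`∑_{j<k} w_{jk} R_{jℓ} + R_{kℓ} = 0` for all `ℓ < k`. -/
def IsUk {d : ℕ} (R : Matrix (Fin d) (Fin d) ℝ) (k : Fin d) (u : Fin d → ℝ) : Prop :=
  u k = 1 ∧ (∀ j, k < j → u j = 0) ∧
    ∀ ℓ, ℓ < k →
      (∑ j ∈ Finset.univ.filter (fun j => j < k), u j * R j ℓ) + R k ℓ = 0

/-- `uᵀ R_{:,i}`, the pairing of `u` with the `i`-th column of `R`. -/
def uR {d : ℕ} (R : Matrix (Fin d) (Fin d) ℝ) (u : Fin d → ℝ) (i : Fin d) : ℝ :=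
  ∑ j, u j * R j i

/-- The quadratic form `uᵀ Γ u`. -/
def quadForm {d : ℕ} (Γ : Matrix (Fin d) (Fin d) ℝ) (u : Fin d → ℝ) : ℝ :=
  ∑ i, ∑ j, u i * Γ i j * u j

/-- The limiting mean `m_k = (u_kᵀ Γ u_k) / (2 u_kᵀ R_{:,k})`. -/
def meanOf {d : ℕ} (Γ R : Matrix (Fin d) (Fin d) ℝ) (u : Fin d → ℝ) (k : Fin d) : ℝ :=
  quadForm Γ u / (2 * uR R u k)

/-- The exponential distribution on `ℝ` with mean `m`. -/
def expMean (m : ℝ) : Measure ℝ :=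
  (volume : Measure ℝ).withDensity fun x =>
    ENNReal.ofReal (if 0 ≤ x then m⁻¹ * Real.exp (-x / m) else 0)

/-- The law of a vector of independent exponential random variables with means `m k`. -/
def prodExp {d : ℕ} (m : Fin d → ℝ) : Measure (Fin d → ℝ) :=
  Measure.pi fun k => expMean (m k)

/-- The pushforwards of `π r` under `z ↦ (r z_1, r² z_2, …, r^d z_d)` converge weakly
to `μ` as `r → 0` (convergence tested against bounded continuous functions). -/
def ScaledWeakLimit {d : ℕ} (π : ℝ → Measure (Fin d → ℝ)) (μ : Measure (Fin d → ℝ)) : Prop :=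
  ∀ g : BoundedContinuousFunction (Fin d → ℝ) ℝ,
    Tendsto (fun r : ℝ => ∫ z, g (fun i => r ^ ((i : ℕ) + 1) * z i) ∂(π r))
      (nhdsWithin 0 (Set.Ioo 0 1)) (nhds (∫ z, g z ∂μ))

/-- The uniform moment bound condition: for all coordinates `i, k`, the `d`-th moment
of `r^k Z_k` under `π r` is bounded for small `r`, and `r` times its `d`-th moment
under `ν i r` tends to `0` as `r → 0`. -/
def UniformMomentBound {d : ℕ} (π : ℝ → Measure (Fin d → ℝ))
    (ν : Fin d → ℝ → Measure (Fin d → ℝ)) : Prop :=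
  ∀ i k : Fin d,
    (∃ r₁ > (0 : ℝ), ∃ C : ℝ, ∀ r ∈ Set.Ioo (0 : ℝ) (min r₁ 1),
      (∫ z, (r ^ ((k : ℕ) + 1) * z k) ^ d ∂(π r)) ≤ C) ∧
    Tendsto (fun r : ℝ => r * ∫ z, (r ^ ((k : ℕ) + 1) * z k) ^ d ∂(ν i r))
      (nhdsWithin 0 (Set.Ioo 0 1)) (nhds 0)

/-- The truncation function `κ`. -/
def kappa (x : ℝ) : ℝ :=
  if x ≤ 1 then x
  else if x ≤ 2 then 3*x^5 - 22*x^4 + 62*x^3 - 84*x^2 + 56*x - 14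
  else 2

/-- The vector `θ_k^{(r)} = ∑_{ℓ=k}^d r^ℓ η_ℓ u_ℓ`. -/
def thetaK {d : ℕ} (u : Fin d → Fin d → ℝ) (η : Fin d → ℝ) (k : Fin d) (r : ℝ) :
    Fin d → ℝ :=
  fun j => ∑ ℓ ∈ Finset.univ.filter (fun ℓ => k ≤ ℓ), r ^ ((ℓ : ℕ) + 1) * η ℓ * u ℓ j

/-- The vector `θ̃_k^{(r)} = r^{k+1/2} η_k u_k + ∑_{ℓ=k+1}^d r^ℓ η_ℓ u_ℓ`. -/
def thetaKt {d : ℕ} (u : Fin d → Fin d → ℝ) (η : Fin d → ℝ) (k : Fin d) (r : ℝ) :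
    Fin d → ℝ :=
  fun j => r ^ ((((k : ℕ) : ℝ) + 1) + 1/2) * η k * u k j
    + ∑ ℓ ∈ Finset.univ.filter (fun ℓ => k < ℓ), r ^ ((ℓ : ℕ) + 1) * η ℓ * u ℓ j

/-- The truncated exponential test function `f̃_θ(z) = exp(∑ κ(θ_i z_i))`. -/
def ftilde {d : ℕ} (θ z : Fin d → ℝ) : ℝ := Real.exp (∑ i, kappa (θ i * z i))

/-- Gradient extra term `ε_{g,θ,j}(z) = θ_j (κ'(θ_j z_j) − 1)`. -/
def epsG {d : ℕ} (θ : Fin d → ℝ) (j : Fin d) (z : Fin d → ℝ) : ℝ :=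
  θ j * (deriv kappa (θ j * z j) - 1)

/-- Hessian extra term `ε_{H,θ,ij}(z)`. -/
def epsH {d : ℕ} (θ : Fin d → ℝ) (i j : Fin d) (z : Fin d → ℝ) : ℝ :=
  θ i * θ j * (deriv kappa (θ i * z i) * deriv kappa (θ j * z j) - 1)
    + (if i = j then θ i ^ 2 * deriv (deriv kappa) (θ i * z i) else 0)

/-- The extra term `γ^r(θ)` in the truncated MGF-BAR. -/
def gammaTerm {d : ℕ} (Γ R : Matrix (Fin d) (Fin d) ℝ) (r : ℝ)
    (π : Measure (Fin d → ℝ)) (ν : Fin d → Measure (Fin d → ℝ))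
    (θ : Fin d → ℝ) : ℝ :=
  (1/2) * (∫ z, (∑ i, ∑ j, Γ i j * epsH θ i j z) * ftilde θ z ∂π)
    + ∑ i : Fin d, r ^ ((i : ℕ) + 1) *
        ((∫ z, (∑ j, epsG θ j z * R j i) * ftilde θ z ∂(ν i))
          - ∫ z, (∑ j, epsG θ j z * R j i) * ftilde θ z ∂π)

open Matrix

section

variable {d : ℕ}

theorem IsPMatrix.diag_pos {R : Matrix (Fin d) (Fin d) ℝ} (hR : IsPMatrix R) (i : Fin d) :
    0 < R i i := by
  simpa [Matrix.det_unique] using hR {i}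

theorem IsPMatrix.eq_zero_of_vecMul_eq_zero_on {R : Matrix (Fin d) (Fin d) ℝ}
    (hR : IsPMatrix R) {s : Finset (Fin d)} {v : Fin d → ℝ} (hv : ∀ i ∉ s, v i = 0)
    (hvR : ∀ j ∈ s, (v ᵥ* R) j = 0) : ∀ i ∈ s, v i = 0 := by
  have hsub :
      (fun i : s => v i) ᵥ* R.submatrix (fun i : s => (i : Fin d)) (fun i : s => (i : Fin d))
        = 0 := by
    ext j
    simp only [Pi.zero_apply, ← hvR j j.2, vecMul, dotProduct, submatrix_apply]
    rw [Finset.sum_coe_sort s fun i => v i * R i j]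
    exact Finset.sum_subset (Finset.subset_univ s) fun i _ hi => by simp [hv i hi]
  intro i hi
  exact congrFun (eq_zero_of_vecMul_eq_zero (hR s).ne' hsub) ⟨i, hi⟩

theorem uR_eq_vecMul (R : Matrix (Fin d) (Fin d) ℝ) (u : Fin d → ℝ) : uR R u = u ᵥ* R := rfl

theorem quadForm_eq_dotProduct_mulVec (Γ : Matrix (Fin d) (Fin d) ℝ) (u : Fin d → ℝ) :
    quadForm Γ u = u ⬝ᵥ Γ *ᵥ u := by
  simp only [quadForm, dotProduct, mulVec, Finset.mul_sum, mul_assoc]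

theorem two_smul_eq_of_skew {n : Type*} [Fintype n] [DecidableEq n]
    {Γ R V Λ : Matrix n n ℝ} (hΛ : IsUnit Λ.det)
    (h : (2 : ℝ) • (Λ * Γ * Λ) = Λ * R * V * Λ⁻¹ + Λ⁻¹ * V * Rᵀ * Λ) :
    (2 : ℝ) • Γ = R * (V * Λ⁻¹ * Λ⁻¹) + Λ⁻¹ * Λ⁻¹ * V * Rᵀ := by
  have := congrArg (fun M => Λ⁻¹ * M * Λ⁻¹) h
  simpa [Matrix.mul_add, Matrix.add_mul, Matrix.mul_assoc, mul_nonsing_inv _ hΛ,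
    nonsing_inv_mul_cancel_left _ _ hΛ] using this

theorem quadForm_eq_of_two_smul_eq {Γ R : Matrix (Fin d) (Fin d) ℝ} {D : Fin d → ℝ}
    (h : (2 : ℝ) • Γ = R * diagonal D + diagonal D * Rᵀ) (u : Fin d → ℝ) :
    quadForm Γ u = ∑ j, D j * u j * uR R u j := by
  have h2 : 2 * quadForm Γ u = u ⬝ᵥ ((2 : ℝ) • Γ) *ᵥ u := by
    rw [quadForm_eq_dotProduct_mulVec, smul_mulVec, dotProduct_smul, smul_eq_mul]
  rw [h, add_mulVec, dotProduct_add, ← mulVec_mulVec, ← mulVec_mulVec, dotProduct_mulVec,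
    dotProduct_mulVec u (diagonal D), mulVec_transpose, ← uR_eq_vecMul] at h2
  simp only [dotProduct, vecMul_diagonal, mulVec_diagonal, ← Finset.sum_add_distrib] at h2
  rw [← mul_right_inj' two_ne_zero, h2, Finset.mul_sum]
  exact Finset.sum_congr rfl fun j _ => by ring

namespace IsUk

variable {R : Matrix (Fin d) (Fin d) ℝ} {k : Fin d} {u : Fin d → ℝ}

theorem uR_eq (hu : IsUk R k u) (j : Fin d) :
    uR R u j = (∑ m ∈ Finset.univ.filter (fun m => m < k), u m * R m j) + R k j := by
  rw [uR, ← Finset.sum_filter_add_sum_filter_not Finset.univ (fun m => m < k)]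
  congr 1
  rw [Finset.sum_eq_single k]
  · rw [hu.1, one_mul]
  · intro m hm hmk
    rw [Finset.mem_filter, not_lt] at hm
    rw [hu.2.1 m (lt_of_le_of_ne hm.2 (Ne.symm hmk)), zero_mul]
  · simp

theorem uR_eq_zero_of_lt (hu : IsUk R k u) {j : Fin d} (hj : j < k) : uR R u j = 0 := by
  rw [hu.uR_eq]
  exact hu.2.2 j hj

theorem uR_self_ne_zero (hR : IsPMatrix R) (hu : IsUk R k u) : uR R u k ≠ 0 := by
  intro hk
  have hvR : ∀ j ∈ Finset.Iic k, (u ᵥ* R) j = 0 := by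
    intro j hj
    rcases (Finset.mem_Iic.1 hj).lt_or_eq with hj | rfl
    · exact hu.uR_eq_zero_of_lt hj
    · exact hk
  have hu0 := hR.eq_zero_of_vecMul_eq_zero_on
    (fun i hi => hu.2.1 i (not_le.1 (Finset.mem_Iic.not.1 hi))) hvR k (Finset.mem_Iic.2 le_rfl)
  exact one_ne_zero (hu.1 ▸ hu0)

theorem quadForm_eq (hu : IsUk R k u) {Γ : Matrix (Fin d) (Fin d) ℝ} {D : Fin d → ℝ}
    (h : (2 : ℝ) • Γ = R * diagonal D + diagonal D * Rᵀ) :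
    quadForm Γ u = D k * uR R u k := by
  rw [quadForm_eq_of_two_smul_eq h, Finset.sum_eq_single k]
  · rw [hu.1, mul_one]
  · intro j _ hj
    rcases hj.lt_or_gt with hj | hj
    · rw [hu.uR_eq_zero_of_lt hj, mul_zero]
    · rw [hu.2.1 j hj, mul_zero, zero_mul]
  · simp

end IsUk

end

theorem skew_symmetric_means_general
    {d : ℕ} (Γ R : Matrix (Fin d) (Fin d) ℝ)
    (hΓpd : Γ.PosDef) (hR : IsPMatrix R)
    (u : Fin d → Fin d → ℝ) (hu : ∀ k, IsUk R k (u k))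
    (Λ V : Matrix (Fin d) (Fin d) ℝ)
    (hΛ : Λ = Matrix.diagonal fun k => (Real.sqrt (Γ k k))⁻¹)
    (hV : V = Matrix.diagonal fun k => (R k k)⁻¹)
    (hskew : (2 : ℝ) • (Λ * Γ * Λ) = Λ * R * V * Λ⁻¹ + Λ⁻¹ * V * R.transpose * Λ) :
    ∀ k : Fin d, meanOf Γ R (u k) k = Γ k k / (2 * R k k) := by
  have hΓ : ∀ m, 0 < Γ m m := fun m => hΓpd.diag_pos
  have hΛ_left_inv : (diagonal fun m => √(Γ m m)) * Λ = 1 := by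
    rw [hΛ, diagonal_mul_diagonal, ← diagonal_one]
    exact congrArg diagonal (funext fun m => mul_inv_cancel₀ (Real.sqrt_pos.2 (hΓ m)).ne')
  have hΛ_inv : Λ⁻¹ = diagonal fun m => √(Γ m m) := inv_eq_left_inv hΛ_left_inv
  have hD : V * Λ⁻¹ * Λ⁻¹ = diagonal fun m => Γ m m / R m m := by
    rw [hV, hΛ_inv, diagonal_mul_diagonal, diagonal_mul_diagonal]
    exact congrArg diagonal (funext fun m => by
      rw [mul_assoc, Real.mul_self_sqrt (hΓ m).le, inv_mul_eq_div])
  have hD' : Λ⁻¹ * Λ⁻¹ * V = diagonal fun m => Γ m m / R m m := by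
    rw [hV, hΛ_inv, diagonal_mul_diagonal, diagonal_mul_diagonal]
    exact congrArg diagonal (funext fun m => by
      rw [Real.mul_self_sqrt (hΓ m).le, div_eq_mul_inv])
  have hΓ_split := two_smul_eq_of_skew (isUnit_det_of_left_inverse hΛ_left_inv) hskew
  rw [hD, hD'] at hΓ_split
  intro k
  rw [meanOf, (hu k).quadForm_eq hΓ_split]
  field_simp [(hu k).uR_self_ne_zero hR, (hR.diag_pos k).ne']

/-- Under the skew symmetric condition
`2ΛΓΛ = ΛRVΛ⁻¹ + Λ⁻¹VR.transposeΛ` with `Λ = diag(Γ_{kk}^{−1/2})` and `V = diag(R_{kk}^{−1})`,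
the limiting means reduce to `m_k = Γ_{kk}/(2R_{kk})`. -/
theorem skew_symmetric_means
    {d : ℕ} (Γ R : Matrix (Fin d) (Fin d) ℝ)
    (hΓsymm : Γ.IsSymm) (hΓpd : Γ.PosDef) (hR : IsPMatrix R)
    (u : Fin d → Fin d → ℝ) (hu : ∀ k, IsUk R k (u k))
    (Λ V : Matrix (Fin d) (Fin d) ℝ)
    (hΛ : Λ = Matrix.diagonal fun k => (Real.sqrt (Γ k k))⁻¹)
    (hV : V = Matrix.diagonal fun k => (R k k)⁻¹)
    (hskew : (2 : ℝ) • (Λ * Γ * Λ) = Λ * R * V * Λ⁻¹ + Λ⁻¹ * V * R.transpose * Λ) :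
    ∀ k : Fin d, meanOf Γ R (u k) k = Γ k k / (2 * R k k) :=
  skew_symmetric_means_general Γ R hΓpd hR u hu Λ V hΛ hV hskew

end SRBMPaper
end
end

section
/- Let R be a d×d nonsingular M-matrix. Then for every k ∈ {1,…,d}: the weights w_{jk} are nonnegative for all j < k (so the vector u_k has nonnegative entries), and u_kᵀ R_{:,i} ≤ 0 for every i with k < i ≤ d. -/
open MeasureTheory Filter

noncomputable section

namespace SRBMPaper

/-!
The weights are produced by a Gaussian-elimination sweep: start from `e_k` and, for
`p = 0, …, k - 1`, add the multiple of `u_p` that kills the `p`-th entry of `vᵀ R`.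
Each multiple is nonnegative: the current `v` is nonnegative with `v_p = 0`, so
`vᵀ R_{:,p} ≤ 0` by the sign pattern of `R`, while `u_pᵀ R_{:,p}` is the ratio of the
leading principal minors of orders `p + 1` and `p`, hence positive. By induction on `k` all
`u_p` with `p < k` are nonnegative, so the sweep ends at a nonnegative solution, which is
`u_k` because the leading principal minor of order `k` is nonzero. For `i > k`, `u_kᵀ R_{:,i}`
pairs a nonnegative vector vanishing at `i` with a column whose other entries are nonpositive.
-/

open Matrix Function

section

variable {d : ℕ} {R : Matrix (Fin d) (Fin d) ℝ}

theorem IsPMatrix.det_submatrix_pos (hR : IsPMatrix R) {ι : Type*} [Fintype ι] [DecidableEq ι]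
    {f : ι → Fin d} (hf : Injective f) : 0 < (R.submatrix f f).det := by
  let e : ι ≃ (Finset.univ.map ⟨f, hf⟩) :=
    (Equiv.ofInjective f hf).trans (Equiv.subtypeEquivRight (by simp))
  have h := hR (Finset.univ.map ⟨f, hf⟩)
  rwa [← det_submatrix_equiv_self e] at h

theorem uR_add_smul (v w : Fin d → ℝ) (c : ℝ) (i : Fin d) :
    uR R (v + c • w) i = uR R v i + c * uR R w i := by
  simp only [uR, Pi.add_apply, Pi.smul_apply, smul_eq_mul, add_mul, Finset.sum_add_distrib,
    Finset.mul_sum, mul_assoc]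

theorem uR_nonpos_of_nonneg (hR : ∀ i j, i ≠ j → R i j ≤ 0) {v : Fin d → ℝ}
    (hv : ∀ j, 0 ≤ v j) {i : Fin d} (hvi : v i = 0) : uR R v i ≤ 0 := by
  refine Finset.sum_nonpos fun j _ => ?_
  obtain rfl | hji := eq_or_ne j i
  · simp [hvi]
  · exact mul_nonpos_of_nonneg_of_nonpos (hv j) (hR j i hji)

theorem comp_vecMul_submatrix {ι : Type*} [Fintype ι] {g : ι → Fin d} (hg : Injective g)
    {v : Fin d → ℝ} (hv : ∀ j ∉ Set.range g, v j = 0) :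
    (v ∘ g) ᵥ* R.submatrix g g = fun t => uR R v (g t) := by
  ext t
  exact Fintype.sum_of_injective g hg _ _ (fun j hj => by simp [hv j hj]) fun _ => rfl

theorem uR_eq_sum_lt_add {k : Fin d} {v : Fin d → ℝ} (hvk : v k = 1)
    (hv : ∀ j, k < j → v j = 0) (ℓ : Fin d) :
    uR R v ℓ = (∑ j ∈ Finset.univ.filter (fun j => j < k), v j * R j ℓ) + R k ℓ := by
  rw [uR, ← Finset.sum_filter_add_sum_filter_not _ (fun j => j < k)]
  congr 1
  rw [Finset.sum_eq_single_of_mem k (by simp), hvk, one_mul]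
  intro j hj hjk
  simp only [Finset.mem_filter, Finset.mem_univ, true_and, not_lt] at hj
  rw [hv j (lt_of_le_of_ne hj (Ne.symm hjk)), zero_mul]

theorem isUk_iff {k : Fin d} {v : Fin d → ℝ} :
    IsUk R k v ↔ v k = 1 ∧ (∀ j, k < j → v j = 0) ∧ ∀ ℓ, ℓ < k → uR R v ℓ = 0 := by
  refine ⟨fun h => ⟨h.1, h.2.1, fun ℓ hℓ => ?_⟩, fun h => ⟨h.1, h.2.1, fun ℓ hℓ => ?_⟩⟩
  · rw [uR_eq_sum_lt_add h.1 h.2.1, h.2.2 ℓ hℓ]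
  · rw [← uR_eq_sum_lt_add h.1 h.2.1, h.2.2 ℓ hℓ]

theorem det_eq_mul_det_submatrix_castSucc {n : ℕ} (B : Matrix (Fin (n + 1)) (Fin (n + 1)) ℝ)
    {x : Fin (n + 1) → ℝ} {c : ℝ} (hx : x (Fin.last n) = 1)
    (hxB : x ᵥ* B = c • Pi.single (Fin.last n) 1) :
    B.det = c * (B.submatrix Fin.castSucc Fin.castSucc).det := by
  have hrow : ∑ t, x t • B t = x ᵥ* B := by
    ext j
    simp [vecMul, dotProduct, Finset.sum_apply]
  have h := det_updateRow_sum B (Fin.last n) x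
  rw [hrow, hxB, det_updateRow_smul, ← adjugate_apply, adjugate_fin_succ_eq_det_submatrix,
    hx, Fin.succAbove_last] at h
  simpa using h.symm

theorem IsPMatrix.uR_self_pos (hR : IsPMatrix R) {k : Fin d} {v : Fin d → ℝ}
    (hv : IsUk R k v) : 0 < uR R v k := by
  obtain ⟨hvk, hv0, hvR⟩ := isUk_iff.1 hv
  let g : Fin (k + 1) → Fin d := Fin.castLE k.isLt
  have hg : Injective g := Fin.castLE_injective _
  have hsupp : ∀ j ∉ Set.range g, v j = 0 := by
    intro j hj
    exact hv0 j (not_le.1 fun hjk => hj ⟨⟨j, Nat.lt_succ_of_le hjk⟩, rfl⟩)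
  have hxB : (v ∘ g) ᵥ* R.submatrix g g = uR R v k • Pi.single (Fin.last k) 1 := by
    rw [comp_vecMul_submatrix hg hsupp]
    ext t
    obtain rfl | ht := eq_or_ne t (Fin.last k)
    · simp only [Pi.smul_apply, Pi.single_eq_same, smul_eq_mul, mul_one]
      rfl
    · simp [ht, hvR (g t) (Fin.val_lt_last ht)]
  have hB := hR.det_submatrix_pos hg
  rw [det_eq_mul_det_submatrix_castSucc _ hvk hxB] at hB
  exact (pos_iff_pos_of_mul_pos hB).2 (hR.det_submatrix_pos (hg.comp (Fin.castSucc_injective _)))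

theorem IsPMatrix.isUk_unique (hR : IsPMatrix R) {k : Fin d} {v v' : Fin d → ℝ}
    (hv : IsUk R k v) (hv' : IsUk R k v') : v = v' := by
  obtain ⟨hvk, hv0, hvR⟩ := isUk_iff.1 hv
  obtain ⟨hvk', hv0', hvR'⟩ := isUk_iff.1 hv'
  let g : {j : Fin d // j < k} → Fin d := Subtype.val
  have hg : Injective g := Subtype.val_injective
  have hsupp : ∀ j ∉ Set.range g, (v - v') j = 0 := by
    intro j hj
    rcases lt_trichotomy j k with h | rfl | h
    · exact absurd ⟨⟨j, h⟩, rfl⟩ hj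
    · simp [hvk, hvk']
    · simp [hv0 j h, hv0' j h]
  have hx : (v - v') ∘ g = 0 := by
    refine eq_zero_of_vecMul_eq_zero (hR.det_submatrix_pos hg).ne' ?_
    rw [comp_vecMul_submatrix hg hsupp]
    ext ℓ
    simp only [uR, Pi.sub_apply, sub_mul, Finset.sum_sub_distrib]
    rw [← uR, ← uR, hvR ℓ ℓ.2, hvR' ℓ ℓ.2, sub_zero, Pi.zero_apply]
  funext j
  refine sub_eq_zero.1 ?_
  by_cases hj : j ∈ Set.range g
  · obtain ⟨i, rfl⟩ := hj
    exact congrFun hx i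
  · exact hsupp j hj

theorem IsMMatrix.exists_nonneg_partial_uk (hR : IsMMatrix R) {u : Fin d → Fin d → ℝ}
    {k : Fin d} (hu : ∀ ℓ < k, IsUk R ℓ (u ℓ)) (hu0 : ∀ ℓ < k, ∀ j, 0 ≤ u ℓ j) :
    ∀ p ≤ (k : ℕ), ∃ v : Fin d → ℝ, (∀ j, 0 ≤ v j) ∧ v k = 1 ∧
      (∀ j, j ≠ k → p ≤ (j : ℕ) → v j = 0) ∧ ∀ m : Fin d, (m : ℕ) < p → uR R v m = 0 := by
  intro p hp
  induction p with
  | zero =>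
    refine ⟨Pi.single k 1, fun j => ?_, by simp, fun j hj _ => by simp [hj], by simp⟩
    by_cases hj : j = k <;> simp [hj]
  | succ p ih =>
    obtain ⟨v, hv0, hvk, hvsupp, hvR⟩ := ih (by omega)
    let m : Fin d := ⟨p, by omega⟩
    have hm : m < k := Fin.lt_def.2 hp
    have hum := isUk_iff.1 (hu m hm)
    have hpos := hR.2.uR_self_pos (hu m hm)
    set c := -uR R v m / uR R (u m) m with hc_def
    have hc : 0 ≤ c :=
      div_nonneg (neg_nonneg.2 (uR_nonpos_of_nonneg hR.1 hv0 (hvsupp m hm.ne le_rfl))) hpos.le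
    refine ⟨v + c • u m, fun j => add_nonneg (hv0 j) (mul_nonneg hc (hu0 m hm j)), ?_, ?_, ?_⟩
    · simp [hvk, hum.2.1 k hm]
    · intro j hjk hj
      simp [hvsupp j hjk (by omega), hum.2.1 j (Fin.lt_def.2 hj)]
    · intro m' hm'
      rw [uR_add_smul]
      rcases Nat.lt_succ_iff_lt_or_eq.1 hm' with h | h
      · rw [hvR m' h, hum.2.2 m' (Fin.lt_def.2 h), mul_zero, add_zero]
      · obtain rfl : m' = m := Fin.ext h
        rw [hc_def]
        field_simp
        ring

theorem IsMMatrix.exists_isUk_nonneg (hR : IsMMatrix R) {u : Fin d → Fin d → ℝ} {k : Fin d}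
    (hu : ∀ ℓ < k, IsUk R ℓ (u ℓ)) (hu0 : ∀ ℓ < k, ∀ j, 0 ≤ u ℓ j) :
    ∃ v, IsUk R k v ∧ ∀ j, 0 ≤ v j := by
  obtain ⟨v, hv0, hvk, hvsupp, hvR⟩ := hR.exists_nonneg_partial_uk hu hu0 k le_rfl
  exact ⟨v, isUk_iff.2 ⟨hvk, fun j hj => hvsupp j hj.ne' hj.le, hvR⟩, hv0⟩

end

/-- For a nonsingular M-matrix `R`, every entry of `u_k` is
nonnegative and `u_kᵀ R_{:,i} ≤ 0` for every `i > k`. -/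
theorem mmatrix_uk_nonneg_and_uR_nonpos
    {d : ℕ} (R : Matrix (Fin d) (Fin d) ℝ) (hR : IsMMatrix R)
    (u : Fin d → Fin d → ℝ) (hu : ∀ k, IsUk R k (u k)) :
    ∀ k : Fin d, (∀ j, 0 ≤ u k j) ∧ (∀ i, k < i → uR R (u k) i ≤ 0) := by
  have nonneg : ∀ k j, 0 ≤ u k j := by
    intro k
    induction k using WellFoundedLT.induction with
    | _ k ih =>
      obtain ⟨v, hv, hv0⟩ := hR.exists_isUk_nonneg (fun ℓ _ => hu ℓ) ih
      rwa [hR.2.isUk_unique (hu k) hv]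
  exact fun k => ⟨nonneg k, fun i hi => uR_nonpos_of_nonneg hR.1 (nonneg k) ((hu k).2.1 i hi)⟩

end SRBMPaper
end
end

section
/- Let d ≥ 1, let Γ be a d×d symmetric positive definite real matrix and R a d×d real matrix, and fix r ∈ (0,1). Suppose the Borel probability measures π^r, ν_1^r, …, ν_d^r on ℝ₊^d satisfy the basic adjoint relationship. Then for every θ ∈ ℝ^d, the truncated MGF-BAR identity holds: (1/2) θᵀΓθ · ψ^r(θ) + Σ_{i=1}^d r^i θᵀR_{:,i} (ψ_i^r(θ) − ψ^r(θ)) + γ^r(θ) = 0, where ψ^r(θ) = ∫ f̃_θ dπ^r, ψ_i^r(θ) = ∫ f̃_θ dν_i^r, and γ^r(θ) is the extra term. In particular, if θ_j ≤ 0 for all j, then γ^r(θ) = 0 and the MGF-BAR holds: (1/2) θᵀΓθ · φ^r(θ) + Σ_{i=1}^d r^i θᵀR_{:,i} (φ_i^r(θ) − φ^r(θ)) = 0, where φ^r(θ) = ∫ e^{θᵀz} dπ^r(z) and φ_i^r(θ) = ∫ e^{θᵀz} dν_i^r(z). -/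
open MeasureTheory Filter

noncomputable section

namespace SRBMPaper

/-! Apply the BAR to the test function `f̃_θ`, which is `C²` and bounded with bounded
derivatives because `κ ≤ 2` and `κ', κ''` are bounded. Its derivatives
`∂_j f̃_θ = θ_j κ'(θ_j z_j) f̃_θ` and `∂_i ∂_j f̃_θ = (θ_i θ_j κ'κ' + 1{i = j} θ_i² κ'') f̃_θ`
are those of `exp (θᵀz)` up to the error terms `ε_g`, `ε_H`, which collect into `γ^r(θ)`.
If `θ ≤ 0`, then `θ_j z_j ≤ 0` on the orthant carrying all the measures, and `κ` is the
identity on `(-∞, 1]`: there the errors vanish and `f̃_θ = exp (θᵀz)`. -/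

theorem hasDerivAt_ite_le {f g f' g' : ℝ → ℝ} {a : ℝ} (hf : ∀ x, HasDerivAt f (f' x) x)
    (hg : ∀ x, HasDerivAt g (g' x) x) (ha : f a = g a) (ha' : f' a = g' a) (x : ℝ) :
    HasDerivAt (fun x => if x ≤ a then f x else g x) (if x ≤ a then f' x else g' x) x := by
  rcases lt_trichotomy x a with hx | rfl | hx
  · rw [if_pos hx.le]
    exact (hf x).congr_of_eventuallyEq <|
      (eventually_lt_nhds hx).mono fun y hy => if_pos hy.le
  · have hleft : HasDerivWithinAt (fun y => if y ≤ x then f y else g y) (f' x) (Set.Iic x) x :=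
      (hf x).hasDerivWithinAt.congr (fun y hy => if_pos hy) (if_pos le_rfl)
    have hright : HasDerivWithinAt (fun y => if y ≤ x then f y else g y) (f' x) (Set.Ici x) x := by
      refine ha' ▸ (hg x).hasDerivWithinAt.congr (fun y hy => ?_) (by simp [ha])
      split_ifs with hyx
      · rw [le_antisymm hyx hy, ha]
      · rfl
    rw [if_pos le_rfl]
    simpa [Set.Iic_union_Ici] using hleft.union hright
  · rw [if_neg hx.not_ge]
    exact (hg x).congr_of_eventuallyEq <|
      (eventually_gt_nhds hx).mono fun y hy => if_neg hy.not_ge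

theorem _root_.Continuous.exists_abs_le_of_abs_le_off_Icc {f : ℝ → ℝ} (hf : Continuous f)
    {a b C : ℝ} (h : ∀ x ∉ Set.Icc a b, |f x| ≤ C) : ∃ K, ∀ x, |f x| ≤ K := by
  obtain ⟨K, hK⟩ := isCompact_Icc.exists_bound_of_continuousOn hf.continuousOn
  refine ⟨max K C, fun x => ?_⟩
  by_cases hx : x ∈ Set.Icc a b
  · exact (hK x hx).trans (le_max_left _ _)
  · exact (h x hx).trans (le_max_right _ _)

theorem hasDerivAt_comp_const_mul {f : ℝ → ℝ} (hf : Differentiable ℝ f) (c t : ℝ) :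
    HasDerivAt (fun t => f (c * t)) (c * deriv f (c * t)) t := by
  refine ((hf (c * t)).hasDerivAt.comp t ((hasDerivAt_id' t).const_mul c)).congr_deriv ?_
  ring

theorem hasDerivAt_kappa_quintic (x : ℝ) :
    HasDerivAt (fun x : ℝ => 3*x^5 - 22*x^4 + 62*x^3 - 84*x^2 + 56*x - 14)
      (15*x^4 - 88*x^3 + 186*x^2 - 168*x + 56) x := by
  refine HasDerivAt.congr_deriv ((((((((hasDerivAt_id x).fun_pow 5).const_mul 3).fun_sub
    (((hasDerivAt_id x).fun_pow 4).const_mul 22)).fun_add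
    (((hasDerivAt_id x).fun_pow 3).const_mul 62)).fun_sub
    (((hasDerivAt_id x).fun_pow 2).const_mul 84)).fun_add
    ((hasDerivAt_id x).const_mul 56)).sub_const 14) ?_
  simp only [id_eq, Nat.cast_ofNat]
  ring

theorem hasDerivAt_kappaDeriv_quartic (x : ℝ) :
    HasDerivAt (fun x : ℝ => 15*x^4 - 88*x^3 + 186*x^2 - 168*x + 56)
      (60*x^3 - 264*x^2 + 372*x - 168) x := by
  refine HasDerivAt.congr_deriv (((((((hasDerivAt_id x).fun_pow 4).const_mul 15).fun_sub
    (((hasDerivAt_id x).fun_pow 3).const_mul 88)).fun_add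
    (((hasDerivAt_id x).fun_pow 2).const_mul 186)).fun_sub
    ((hasDerivAt_id x).const_mul 168)).add_const 56) ?_
  simp only [id_eq, Nat.cast_ofNat]
  ring

def kappaDeriv (x : ℝ) : ℝ :=
  if x ≤ 1 then 1
  else if x ≤ 2 then 15*x^4 - 88*x^3 + 186*x^2 - 168*x + 56
  else 0

def kappaDeriv2 (x : ℝ) : ℝ :=
  if x ≤ 1 then 0
  else if x ≤ 2 then 60*x^3 - 264*x^2 + 372*x - 168
  else 0

theorem hasDerivAt_kappa (x : ℝ) : HasDerivAt kappa (kappaDeriv x) x :=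
  hasDerivAt_ite_le (fun x => hasDerivAt_id x)
    (hasDerivAt_ite_le hasDerivAt_kappa_quintic (fun x => hasDerivAt_const x 2)
      (by norm_num) (by norm_num))
    (by norm_num) (by norm_num) x

theorem hasDerivAt_kappaDeriv (x : ℝ) : HasDerivAt kappaDeriv (kappaDeriv2 x) x :=
  hasDerivAt_ite_le (fun x => hasDerivAt_const x 1)
    (hasDerivAt_ite_le hasDerivAt_kappaDeriv_quartic (fun x => hasDerivAt_const x 0)
      (by norm_num) (by norm_num))
    (by norm_num) (by norm_num) x

theorem deriv_kappa : deriv kappa = kappaDeriv := funext fun x => (hasDerivAt_kappa x).deriv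

theorem deriv_kappaDeriv : deriv kappaDeriv = kappaDeriv2 :=
  funext fun x => (hasDerivAt_kappaDeriv x).deriv

theorem continuous_kappaDeriv2 : Continuous kappaDeriv2 :=
  continuous_const.if_le
    ((Continuous.if_le (by fun_prop) continuous_const continuous_id continuous_const
      fun x (hx : x = 2) => by norm_num [hx]))
    continuous_id continuous_const fun x (hx : x = 1) => by norm_num [hx]

theorem contDiff_kappa : ContDiff ℝ 2 kappa := by
  rw [show (2 : WithTop ℕ∞) = 1 + 1 from rfl, contDiff_succ_iff_deriv, deriv_kappa,
    contDiff_one_iff_deriv, deriv_kappaDeriv]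
  exact ⟨fun x => (hasDerivAt_kappa x).differentiableAt, by simp,
    fun x => (hasDerivAt_kappaDeriv x).differentiableAt, continuous_kappaDeriv2⟩

theorem kappa_of_le_one {x : ℝ} (hx : x ≤ 1) : kappa x = x := if_pos hx

theorem deriv_kappa_of_le_one {x : ℝ} (hx : x ≤ 1) : deriv kappa x = 1 := by
  rw [deriv_kappa, kappaDeriv, if_pos hx]

theorem deriv_deriv_kappa_of_le_one {x : ℝ} (hx : x ≤ 1) : deriv (deriv kappa) x = 0 := by
  rw [deriv_kappa, deriv_kappaDeriv, kappaDeriv2, if_pos hx]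

theorem kappa_le_two (x : ℝ) : kappa x ≤ 2 := by
  unfold kappa
  split_ifs with h₁ h₂
  · linarith
  · -- `2 - κ(x) = (2 - x)³ (3x² - 4x + 2)` on `[1, 2]`
    nlinarith [mul_nonneg (pow_nonneg (sub_nonneg.2 h₂) 3)
      (by nlinarith [sq_nonneg (3 * x - 2)] : (0 : ℝ) ≤ 3 * x ^ 2 - 4 * x + 2)]
  · rfl

theorem exists_abs_deriv_kappa_le : ∃ K, ∀ x, |deriv kappa x| ≤ K := by
  refine (contDiff_kappa.continuous_deriv one_le_two).exists_abs_le_of_abs_le_off_Icc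
    (a := 1) (b := 2) (C := 1) fun x hx => ?_
  rw [Set.mem_Icc, not_and_or, not_le, not_le] at hx
  rcases hx with hx | hx
  · simp [deriv_kappa, kappaDeriv, hx.le]
  · simp [deriv_kappa, kappaDeriv, hx.not_ge, (one_lt_two.trans hx).not_ge]

theorem exists_abs_deriv_deriv_kappa_le : ∃ K, ∀ x, |deriv (deriv kappa) x| ≤ K := by
  rw [deriv_kappa, deriv_kappaDeriv]
  refine continuous_kappaDeriv2.exists_abs_le_of_abs_le_off_Icc
    (a := 1) (b := 2) (C := 0) fun x hx => ?_
  rw [Set.mem_Icc, not_and_or, not_le, not_le] at hx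
  rcases hx with hx | hx
  · simp [kappaDeriv2, hx.le]
  · simp [kappaDeriv2, hx.not_ge, (one_lt_two.trans hx).not_ge]

section ExpSum

variable {d : ℕ} {g g' g'' : Fin d → ℝ → ℝ}

theorem hasFDerivAt_exp_sum (hg : ∀ i t, HasDerivAt (g i) (g' i t) t) (z : Fin d → ℝ) :
    HasFDerivAt (fun w : Fin d → ℝ => Real.exp (∑ i, g i (w i)))
      (Real.exp (∑ i, g i (z i)) •
        ∑ i, g' i (z i) • ContinuousLinearMap.proj (R := ℝ) (φ := fun _ : Fin d => ℝ) i) z := by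
  refine HasFDerivAt.exp (HasFDerivAt.fun_sum fun i _ => ?_)
  exact (hg i (z i)).comp_hasFDerivAt (f := fun w : Fin d → ℝ => w i) z (hasFDerivAt_apply i z)

theorem pd1_exp_sum (hg : ∀ i t, HasDerivAt (g i) (g' i t) t) (j : Fin d) (z : Fin d → ℝ) :
    pd1 (fun w => Real.exp (∑ i, g i (w i))) j z = g' j (z j) * Real.exp (∑ i, g i (z i)) := by
  rw [pd1, (hasFDerivAt_exp_sum hg z).fderiv]
  simp [Pi.single_apply, mul_comm]

theorem pd2_exp_sum (hg : ∀ i t, HasDerivAt (g i) (g' i t) t)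
    (hg' : ∀ i t, HasDerivAt (g' i) (g'' i t) t) (i j : Fin d) (z : Fin d → ℝ) :
    pd2 (fun w => Real.exp (∑ k, g k (w k))) i j z
      = (g' i (z i) * g' j (z j) + if i = j then g'' i (z i) else 0)
        * Real.exp (∑ k, g k (z k)) := by
  have hpd1 : (fun w => pd1 (fun w => Real.exp (∑ k, g k (w k))) j w)
      = fun w => g' j (w j) * Real.exp (∑ k, g k (w k)) := funext (pd1_exp_sum hg j)
  have hg'j : HasFDerivAt (fun w : Fin d → ℝ => g' j (w j))
      (g'' j (z j) • ContinuousLinearMap.proj (R := ℝ) (φ := fun _ : Fin d => ℝ) j) z :=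
    (hg' j (z j)).comp_hasFDerivAt z (hasFDerivAt_apply j z)
  rw [pd2, hpd1, (hg'j.fun_mul (hasFDerivAt_exp_sum hg z)).fderiv]
  simp only [add_apply, smul_apply, sum_apply, ContinuousLinearMap.proj_apply, Pi.single_apply,
    smul_eq_mul, mul_ite, mul_one, mul_zero, Finset.sum_ite_eq', Finset.mem_univ, if_true,
    eq_comm (a := j)]
  split_ifs with hij
  · subst hij
    ring
  · ring

end ExpSum

theorem isC2Bounded_of_forall_abs_le {d : ℕ} {f : (Fin d → ℝ) → ℝ} (hf : ContDiff ℝ 2 f)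
    (h₀ : ∃ C, ∀ z ∈ posOrthant d, |f z| ≤ C)
    (h₁ : ∀ j, ∃ C, ∀ z ∈ posOrthant d, |pd1 f j z| ≤ C)
    (h₂ : ∀ i j, ∃ C, ∀ z ∈ posOrthant d, |pd2 f i j z| ≤ C) : IsC2Bounded f := by
  obtain ⟨C₀, hC₀⟩ := h₀
  choose C₁ hC₁ using h₁
  choose C₂ hC₂ using h₂
  obtain ⟨M₁, hM₁⟩ := (Set.finite_range C₁).bddAbove
  obtain ⟨M₂, hM₂⟩ := (Set.finite_range (Function.uncurry C₂)).bddAbove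
  refine ⟨hf, max C₀ (max M₁ M₂), fun z hz => ⟨?_, fun j => ?_, fun i j => ?_⟩⟩
  · exact (hC₀ z hz).trans (le_max_left _ _)
  · exact (hC₁ j z hz).trans <| (hM₁ ⟨j, rfl⟩).trans <|
      (le_max_left _ _).trans (le_max_right _ _)
  · exact (hC₂ i j z hz).trans <| (hM₂ ⟨(i, j), rfl⟩).trans <|
      (le_max_right _ _).trans (le_max_right _ _)

section Ftilde

variable {d : ℕ} (θ : Fin d → ℝ)

theorem differentiable_kappa : Differentiable ℝ kappa :=
  fun x => (hasDerivAt_kappa x).differentiableAt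

theorem differentiable_deriv_kappa : Differentiable ℝ (deriv kappa) :=
  deriv_kappa ▸ fun x => (hasDerivAt_kappaDeriv x).differentiableAt

theorem contDiff_ftilde : ContDiff ℝ 2 (ftilde θ) := by
  have := contDiff_kappa
  unfold ftilde
  fun_prop

theorem pd1_ftilde (j : Fin d) (z : Fin d → ℝ) :
    pd1 (ftilde θ) j z = θ j * deriv kappa (θ j * z j) * ftilde θ z :=
  pd1_exp_sum (fun i => hasDerivAt_comp_const_mul differentiable_kappa (θ i)) j z

theorem pd2_ftilde (i j : Fin d) (z : Fin d → ℝ) :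
    pd2 (ftilde θ) i j z
      = (θ i * deriv kappa (θ i * z i) * (θ j * deriv kappa (θ j * z j))
          + if i = j then θ i * (θ i * deriv (deriv kappa) (θ i * z i)) else 0) * ftilde θ z :=
  pd2_exp_sum (fun i => hasDerivAt_comp_const_mul differentiable_kappa (θ i))
    (fun i t => (hasDerivAt_comp_const_mul differentiable_deriv_kappa (θ i) t).const_mul (θ i))
    i j z

theorem ftilde_le (z : Fin d → ℝ) : ftilde θ z ≤ Real.exp (2 * d) := by
  rw [ftilde, Real.exp_le_exp]
  simpa [mul_comm] using Finset.sum_le_sum fun i (_ : i ∈ Finset.univ) => kappa_le_two (θ i * z i)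

theorem abs_ftilde_le (z : Fin d → ℝ) : |ftilde θ z| ≤ Real.exp (2 * d) :=
  (abs_of_pos (Real.exp_pos _)).trans_le (ftilde_le θ z)

theorem exists_abs_pd1_ftilde_le (j : Fin d) : ∃ C, ∀ z, |pd1 (ftilde θ) j z| ≤ C := by
  obtain ⟨K, hK⟩ := exists_abs_deriv_kappa_le
  refine ⟨|θ j| * K * Real.exp (2 * d), fun z => ?_⟩
  have hK₀ : 0 ≤ K := (abs_nonneg _).trans (hK 0)
  rw [pd1_ftilde, abs_mul, abs_mul]
  gcongr
  exacts [hK _, abs_ftilde_le θ z]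

theorem exists_abs_pd2_ftilde_le (i j : Fin d) : ∃ C, ∀ z, |pd2 (ftilde θ) i j z| ≤ C := by
  obtain ⟨K₁, hK₁⟩ := exists_abs_deriv_kappa_le
  obtain ⟨K₂, hK₂⟩ := exists_abs_deriv_deriv_kappa_le
  refine ⟨(|θ i| * K₁ * (|θ j| * K₁) + |θ i| * (|θ i| * K₂)) * Real.exp (2 * d), fun z => ?_⟩
  have hK₁₀ : 0 ≤ K₁ := (abs_nonneg _).trans (hK₁ 0)
  have hK₂₀ : 0 ≤ K₂ := (abs_nonneg _).trans (hK₂ 0)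
  rw [pd2_ftilde, abs_mul]
  refine mul_le_mul ((abs_add_le _ _).trans (add_le_add ?_ ?_)) (abs_ftilde_le θ z)
    (abs_nonneg _) (by positivity)
  · simp only [abs_mul]
    gcongr <;> exact hK₁ _
  · split_ifs
    · simp only [abs_mul]
      gcongr
      exact hK₂ _
    · simpa using by positivity

theorem isC2Bounded_ftilde : IsC2Bounded (ftilde θ) :=
  isC2Bounded_of_forall_abs_le (contDiff_ftilde θ) ⟨_, fun z _ => abs_ftilde_le θ z⟩
    (fun j => (exists_abs_pd1_ftilde_le θ j).imp fun _ h z _ => h z)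
    (fun i j => (exists_abs_pd2_ftilde_le θ i j).imp fun _ h z _ => h z)

variable (μ : Measure (Fin d → ℝ)) [IsFiniteMeasure μ]

theorem integrable_ftilde : Integrable (ftilde θ) μ :=
  .of_bound (contDiff_ftilde θ).continuous.aestronglyMeasurable _ (ae_of_all _ (abs_ftilde_le θ))

theorem integrable_pd1_ftilde (j : Fin d) : Integrable (pd1 (ftilde θ) j) μ :=
  have ⟨_, hC⟩ := exists_abs_pd1_ftilde_le θ j
  .of_bound (measurable_fderiv_apply_const ℝ _ _).aestronglyMeasurable _ (ae_of_all _ hC)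

theorem integrable_pd2_ftilde (i j : Fin d) : Integrable (pd2 (ftilde θ) i j) μ :=
  have ⟨_, hC⟩ := exists_abs_pd2_ftilde_le θ i j
  .of_bound (measurable_fderiv_apply_const ℝ _ _).aestronglyMeasurable _ (ae_of_all _ hC)

theorem integral_sum_pd1_ftilde (R : Matrix (Fin d) (Fin d) ℝ) (i : Fin d) :
    ∫ z, ∑ j, R j i * pd1 (ftilde θ) j z ∂μ
      = (∑ j, θ j * R j i) * ∫ z, ftilde θ z ∂μ
        + ∫ z, (∑ j, epsG θ j z * R j i) * ftilde θ z ∂μ := by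
  have hε : ∀ z, (∑ j, epsG θ j z * R j i) * ftilde θ z
      = ∑ j, R j i * pd1 (ftilde θ) j z - (∑ j, θ j * R j i) * ftilde θ z := fun z => by
    simp only [pd1_ftilde, epsG, Finset.sum_mul, ← Finset.sum_sub_distrib]
    exact Finset.sum_congr rfl fun j _ => by ring
  have hint : Integrable (fun z => ∑ j, R j i * pd1 (ftilde θ) j z) μ :=
    integrable_finsetSum _ fun j _ => (integrable_pd1_ftilde θ μ j).const_mul _
  simp only [hε]
  rw [integral_sub hint ((integrable_ftilde θ μ).const_mul _), integral_const_mul]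
  ring

theorem integral_sum_pd2_ftilde (Γ : Matrix (Fin d) (Fin d) ℝ) :
    ∫ z, ∑ i, ∑ j, Γ i j * pd2 (ftilde θ) i j z ∂μ
      = (∑ i, ∑ j, θ i * Γ i j * θ j) * ∫ z, ftilde θ z ∂μ
        + ∫ z, (∑ i, ∑ j, Γ i j * epsH θ i j z) * ftilde θ z ∂μ := by
  have hε : ∀ z, (∑ i, ∑ j, Γ i j * epsH θ i j z) * ftilde θ z
      = ∑ i, ∑ j, Γ i j * pd2 (ftilde θ) i j z
        - (∑ i, ∑ j, θ i * Γ i j * θ j) * ftilde θ z := fun z => by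
    simp only [pd2_ftilde, epsH, Finset.sum_mul, ← Finset.sum_sub_distrib]
    refine Finset.sum_congr rfl fun i _ => Finset.sum_congr rfl fun j _ => ?_
    split_ifs <;> ring
  have hint : Integrable (fun z => ∑ i, ∑ j, Γ i j * pd2 (ftilde θ) i j z) μ :=
    integrable_finsetSum _ fun i _ => integrable_finsetSum _ fun j _ =>
      (integrable_pd2_ftilde θ μ i j).const_mul _
  simp only [hε]
  rw [integral_sub hint ((integrable_ftilde θ μ).const_mul _), integral_const_mul]
  ring

end Ftilde

theorem SatisfiesBAR.truncated_identity {d : ℕ} {Γ R : Matrix (Fin d) (Fin d) ℝ} {r : ℝ}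
    {π : Measure (Fin d → ℝ)} {ν : Fin d → Measure (Fin d → ℝ)} (hBAR : SatisfiesBAR Γ R r π ν)
    [IsFiniteMeasure π] [∀ i, IsFiniteMeasure (ν i)] (θ : Fin d → ℝ) :
    (1 / 2) * (∑ i, ∑ j, θ i * Γ i j * θ j) * (∫ z, ftilde θ z ∂π)
      + (∑ i : Fin d, r ^ ((i : ℕ) + 1) * (∑ j, θ j * R j i) *
          ((∫ z, ftilde θ z ∂(ν i)) - ∫ z, ftilde θ z ∂π))
      + gammaTerm Γ R r π ν θ = 0 := by
  have h := hBAR (ftilde θ) (isC2Bounded_ftilde θ)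
  simp only [integral_sum_pd2_ftilde, integral_sum_pd1_ftilde] at h
  have hsum : (∑ i : Fin d, r ^ ((i : ℕ) + 1) * (∑ j, θ j * R j i) *
        ((∫ z, ftilde θ z ∂(ν i)) - ∫ z, ftilde θ z ∂π))
      + ∑ i : Fin d, r ^ ((i : ℕ) + 1) *
        ((∫ z, (∑ j, epsG θ j z * R j i) * ftilde θ z ∂(ν i))
          - ∫ z, (∑ j, epsG θ j z * R j i) * ftilde θ z ∂π)
      = (∑ i : Fin d, r ^ ((i : ℕ) + 1) * ((∑ j, θ j * R j i) * ∫ z, ftilde θ z ∂(ν i)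
          + ∫ z, (∑ j, epsG θ j z * R j i) * ftilde θ z ∂(ν i)))
        - ∑ i : Fin d, r ^ ((i : ℕ) + 1) * ((∑ j, θ j * R j i) * ∫ z, ftilde θ z ∂π
          + ∫ z, (∑ j, epsG θ j z * R j i) * ftilde θ z ∂π) := by
    rw [← Finset.sum_add_distrib, ← Finset.sum_sub_distrib]
    exact Finset.sum_congr rfl fun i _ => by ring
  rw [gammaTerm]
  linear_combination h + hsum

section Orthant

variable {d : ℕ} {θ : Fin d → ℝ} {z : Fin d → ℝ}

theorem epsG_eq_zero {j : Fin d} (h : θ j * z j ≤ 1) : epsG θ j z = 0 := by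
  rw [epsG, deriv_kappa_of_le_one h, sub_self, mul_zero]

theorem epsH_eq_zero {i j : Fin d} (hi : θ i * z i ≤ 1) (hj : θ j * z j ≤ 1) :
    epsH θ i j z = 0 := by
  simp [epsH, deriv_kappa_of_le_one hi, deriv_kappa_of_le_one hj,
    deriv_deriv_kappa_of_le_one hi]

theorem ftilde_eq_exp (h : ∀ j, θ j * z j ≤ 1) : ftilde θ z = Real.exp (∑ j, θ j * z j) := by
  simp only [ftilde, kappa_of_le_one (h _)]

theorem gammaTerm_eq_zero {Γ R : Matrix (Fin d) (Fin d) ℝ} {r : ℝ} {π : Measure (Fin d → ℝ)}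
    {ν : Fin d → Measure (Fin d → ℝ)} (hπ : ∀ᵐ z ∂π, ∀ j, θ j * z j ≤ 1)
    (hν : ∀ i, ∀ᵐ z ∂(ν i), ∀ j, θ j * z j ≤ 1) : gammaTerm Γ R r π ν θ = 0 := by
  have hG : ∀ μ : Measure (Fin d → ℝ), (∀ᵐ z ∂μ, ∀ j, θ j * z j ≤ 1) → ∀ i,
      ∫ z, (∑ j, epsG θ j z * R j i) * ftilde θ z ∂μ = 0 := fun μ hμ i =>
    integral_eq_zero_of_ae <| hμ.mono fun z hz => by simp [epsG_eq_zero (hz _)]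
  have hH : ∫ z, (∑ i, ∑ j, Γ i j * epsH θ i j z) * ftilde θ z ∂π = 0 :=
    integral_eq_zero_of_ae <| hπ.mono fun z hz => by simp [epsH_eq_zero (hz _) (hz _)]
  simp [gammaTerm, hH, hG π hπ, fun i => hG (ν i) (hν i) i]

theorem integral_ftilde_eq_integral_exp {μ : Measure (Fin d → ℝ)}
    (h : ∀ᵐ z ∂μ, ∀ j, θ j * z j ≤ 1) :
    ∫ z, ftilde θ z ∂μ = ∫ z, Real.exp (∑ j, θ j * z j) ∂μ :=
  integral_congr_ae <| h.mono fun _ => ftilde_eq_exp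

end Orthant

theorem measurableSet_posOrthant (d : ℕ) : MeasurableSet (posOrthant d) := by
  unfold posOrthant
  measurability

theorem ae_mem_posOrthant {d : ℕ} {μ : Measure (Fin d → ℝ)} [IsProbabilityMeasure μ]
    (h : μ (posOrthant d) = 1) : ∀ᵐ z ∂μ, z ∈ posOrthant d :=
  mem_ae_iff.2 <| (prob_compl_eq_zero_iff (measurableSet_posOrthant d)).2 h

theorem truncated_mgf_bar_general
    {d : ℕ}
    (Γ R : Matrix (Fin d) (Fin d) ℝ)
    (r : ℝ)
    (π : Measure (Fin d → ℝ)) (ν : Fin d → Measure (Fin d → ℝ))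
    (hπ : IsProbabilityMeasure π) (hπO : π (posOrthant d) = 1)
    (hν : ∀ i, IsProbabilityMeasure (ν i) ∧
      ν i {z | z ∈ posOrthant d ∧ z i = 0} = 1)
    (hBAR : SatisfiesBAR Γ R r π ν) :
    (∀ θ : Fin d → ℝ,
      (1 / 2) * (∑ i, ∑ j, θ i * Γ i j * θ j) * (∫ z, ftilde θ z ∂π)
        + (∑ i : Fin d, r ^ ((i : ℕ) + 1) * (∑ j, θ j * R j i) *
            ((∫ z, ftilde θ z ∂(ν i)) - ∫ z, ftilde θ z ∂π))
        + gammaTerm Γ R r π ν θ = 0) ∧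
    (∀ θ : Fin d → ℝ, (∀ j, θ j ≤ 0) →
      gammaTerm Γ R r π ν θ = 0 ∧
      (1 / 2) * (∑ i, ∑ j, θ i * Γ i j * θ j)
          * (∫ z, Real.exp (∑ j, θ j * z j) ∂π)
        + (∑ i : Fin d, r ^ ((i : ℕ) + 1) * (∑ j, θ j * R j i) *
            ((∫ z, Real.exp (∑ j, θ j * z j) ∂(ν i))
              - ∫ z, Real.exp (∑ j, θ j * z j) ∂π)) = 0) := by
  have hνP : ∀ i, IsProbabilityMeasure (ν i) := fun i => (hν i).1
  have hνO : ∀ i, ν i (posOrthant d) = 1 := fun i =>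
    le_antisymm prob_le_one ((hν i).2 ▸ measure_mono fun _ hz => hz.1)
  refine ⟨hBAR.truncated_identity, fun θ hθ => ?_⟩
  have hθz : ∀ z ∈ posOrthant d, ∀ j, θ j * z j ≤ 1 := fun z hz j =>
    (mul_nonpos_of_nonpos_of_nonneg (hθ j) (hz j)).trans zero_le_one
  have hπθ := (ae_mem_posOrthant hπO).mono hθz
  have hνθ := fun i => (ae_mem_posOrthant (hνO i)).mono hθz
  have hγ := gammaTerm_eq_zero (Γ := Γ) (R := R) (r := r) hπθ hνθ
  refine ⟨hγ, ?_⟩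
  have h := hBAR.truncated_identity θ
  simp only [hγ, integral_ftilde_eq_integral_exp hπθ, integral_ftilde_eq_integral_exp (hνθ _),
    add_zero] at h
  exact h

/-- The truncated MGF-BAR identity: for any `θ`,
`(1/2) θᵀΓθ ψ^r(θ) + ∑ᵢ rⁱ θᵀR_{:,i}(ψᵢ^r(θ) − ψ^r(θ)) + γ^r(θ) = 0`; and for
`θ ≤ 0` the extra term vanishes, yielding the (untruncated) MGF-BAR. -/
theorem truncated_mgf_bar
    {d : ℕ} (hd : 1 ≤ d)
    (Γ R : Matrix (Fin d) (Fin d) ℝ)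
    (hΓsymm : Γ.IsSymm) (hΓpd : Γ.PosDef)
    (r : ℝ) (hr : r ∈ Set.Ioo (0 : ℝ) 1)
    (π : Measure (Fin d → ℝ)) (ν : Fin d → Measure (Fin d → ℝ))
    (hπ : IsProbabilityMeasure π) (hπO : π (posOrthant d) = 1)
    (hν : ∀ i, IsProbabilityMeasure (ν i) ∧
      ν i {z | z ∈ posOrthant d ∧ z i = 0} = 1)
    (hBAR : SatisfiesBAR Γ R r π ν) :
    (∀ θ : Fin d → ℝ,
      (1 / 2) * (∑ i, ∑ j, θ i * Γ i j * θ j) * (∫ z, ftilde θ z ∂π)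
        + (∑ i : Fin d, r ^ ((i : ℕ) + 1) * (∑ j, θ j * R j i) *
            ((∫ z, ftilde θ z ∂(ν i)) - ∫ z, ftilde θ z ∂π))
        + gammaTerm Γ R r π ν θ = 0) ∧
    (∀ θ : Fin d → ℝ, (∀ j, θ j ≤ 0) →
      gammaTerm Γ R r π ν θ = 0 ∧
      (1 / 2) * (∑ i, ∑ j, θ i * Γ i j * θ j)
          * (∫ z, Real.exp (∑ j, θ j * z j) ∂π)
        + (∑ i : Fin d, r ^ ((i : ℕ) + 1) * (∑ j, θ j * R j i) *
            ((∫ z, Real.exp (∑ j, θ j * z j) ∂(ν i))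
              - ∫ z, Real.exp (∑ j, θ j * z j) ∂π)) = 0) :=
  truncated_mgf_bar_general Γ R r π ν hπ hπO hν hBAR

end SRBMPaper
end
end
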